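/- For every pair of positive integers m and k, there exists a finite (solvable) group G such that cd(G) = {1, n, n², …, n^k} where n is a product of m distinct primes; consequently the bipartite divisor graph B(G) is isomorphic to the complete bipartite graph K_{m,k}. -/

import Mathlib

open SimpleGraph

/-- Vertex type of the bipartite divisor graph of a set of naturals:
the disjoint union of `X` and of the primes dividing some element of `X`. -/
abbrev BDGVert (X : Set ℕ) : Type :=
  {x : ℕ // x ∈ X} ⊕ {p : ℕ // p.Prime ∧ ∃ x ∈ X, p ∣ x}

/-- The bipartite divisor graph `B(X)`: a prime `p` is adjacent to `x ∈ X` iff `p ∣ x`. -/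
def bdg (X : Set ℕ) : SimpleGraph (BDGVert X) :=
  SimpleGraph.fromRel (fun a b =>
    match a, b with
    | Sum.inr p, Sum.inl x => p.1 ∣ x.1
    | _, _ => False)

/-- The prime graph `Δ(X)`: primes `p ≠ q` are adjacent iff `pq` divides some element of `X`. -/
def primeGraph (X : Set ℕ) : SimpleGraph {p : ℕ // p.Prime ∧ ∃ x ∈ X, p ∣ x} :=
  SimpleGraph.fromRel (fun p q => ∃ x ∈ X, p.1 * q.1 ∣ x)

/-- The common divisor graph `Γ(X)`: distinct `x, y ∈ X` are adjacent iff `gcd(x,y) ≠ 1`. -/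
def cdGraph (X : Set ℕ) : SimpleGraph {x : ℕ // x ∈ X} :=
  SimpleGraph.fromRel (fun a b => Nat.gcd a.1 b.1 ≠ 1)

/-- The set of irreducible complex character degrees of a group `G`. -/
def charDegrees (G : Type) [Group G] : Set ℕ :=
  {n | ∃ V : FDRep ℂ G, CategoryTheory.Simple V ∧ Module.finrank ℂ V = n}

/-- Disjoint union of two simple graphs. -/
def disjUnionGraph {α β : Type*} (G : SimpleGraph α) (H : SimpleGraph β) :
    SimpleGraph (α ⊕ β) where
  Adj a b :=
    match a, b with
    | Sum.inl x, Sum.inl y => G.Adj x y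
    | Sum.inr x, Sum.inr y => H.Adj x y
    | _, _ => False
  symm := by
    exact ⟨by rintro (x | x) (y | y) h <;> simp_all <;> exact h.symm⟩
  loopless := by
    exact ⟨by rintro (x | x) h <;> simp_all⟩

/-!
Take `A = (ZMod p)^k` and `H = C^k`, where `C ≤ (ZMod p)ˣ` is the cyclic subgroup of order `n`, so
that `A ⋊ H` is the `k`-th power of the Frobenius group of order `pn`. For a semidirect product
`A ⋊ H` of abelian groups, the irreducible degrees are exactly the sizes of the `H`-orbits on the
characters of `A`. An irreducible representation contains a weight vector for `A`; it can be taken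
to be an eigenvector of the stabiliser of its weight `ψ`, because that stabiliser is abelian. Its
`H`-translates are then weight vectors for the distinct weights in the orbit of `ψ`, and they span
the representation. Conversely, the monomial representation on the functions on an orbit is
irreducible. Via a dot product, the characters of `(ZMod p)^k` are identified equivariantly with
`(ZMod p)^k`, where the orbit of `c` has `n ^ #(support c)` elements. Hence
`cd(G) = {n^i | i ≤ k}`, and the claims about the graph are arithmetic on this set.
-/

section CommonEigenvector

attribute [local instance] LieRing.ofAssociativeRing LieAlgebra.ofAssociativeAlgebra

open LieModule in
/-- Lie's theorem, applied to the abelian Lie algebra spanned by the family. -/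
theorem Module.End.exists_forall_apply_eq_smul_of_commute {V ι : Type*} [AddCommGroup V]
    [Module ℂ V] [FiniteDimensional ℂ V] [Nontrivial V] (f : ι → Module.End ℂ V)
    (hf : ∀ i j, Commute (f i) (f j)) :
    ∃ v : V, v ≠ 0 ∧ ∀ i, ∃ c : ℂ, f i v = c • v := by
  let L := LieSubalgebra.lieSpan ℂ (Module.End ℂ V) (Set.range f)
  have : IsLieAbelian L := by
    rw [LieSubalgebra.isLieAbelian_lieSpan_iff]
    rintro _ ⟨i, rfl⟩ _ ⟨j, rfl⟩
    exact (hf i j).lie_eq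
  obtain ⟨χ, hχ⟩ := exists_nontrivial_weightSpace_of_isSolvable ℂ L V
  obtain ⟨⟨v, hv⟩, hv0⟩ := exists_ne (0 : weightSpace V χ)
  refine ⟨v, by simpa using hv0, fun i => ⟨χ ⟨f i, LieSubalgebra.subset_lieSpan ⟨i, rfl⟩⟩, ?_⟩⟩
  exact (mem_weightSpace (M := V) χ v).mp hv ⟨f i, LieSubalgebra.subset_lieSpan ⟨i, rfl⟩⟩

end CommonEigenvector

namespace Representation

variable {k G W : Type*} [Field k] [Monoid G] [AddCommGroup W] [Module k W]

lemma isIrreducible_of_forall_toSubmodule_eq_top [Nontrivial W] {ρ : Representation k G W}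
    (h : ∀ U : Subrepresentation ρ, U.toSubmodule ≠ ⊥ → U.toSubmodule = ⊤) :
    ρ.IsIrreducible where
  exists_pair_ne := ⟨⊥, ⊤, fun h => bot_ne_top (congrArg Subrepresentation.toSubmodule h)⟩
  eq_bot_or_eq_top U := (em (U.toSubmodule = ⊥)).imp
    (fun hU => Subrepresentation.toSubmodule_injective hU)
    fun hU => Subrepresentation.toSubmodule_injective (h U hU)

namespace IsIrreducible

lemma nontrivial (ρ : Representation k G W) [ρ.IsIrreducible] : Nontrivial W := by
  obtain ⟨U, U', hUU'⟩ := exists_pair_ne (Subrepresentation ρ)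
  by_contra hW
  rw [not_nontrivial_iff_subsingleton] at hW
  exact hUU' (Subrepresentation.toSubmodule_injective (Subsingleton.elim _ _))

lemma toSubmodule_eq_top {ρ : Representation k G W} [ρ.IsIrreducible] (U : Subrepresentation ρ)
    (hU : U.toSubmodule ≠ ⊥) : U.toSubmodule = ⊤ :=
  congrArg Subrepresentation.toSubmodule
    ((eq_bot_or_eq_top U).resolve_left fun h => hU (congrArg Subrepresentation.toSubmodule h))

end IsIrreducible

end Representation

namespace FDRep

open CategoryTheory

variable {k G : Type*} [Field k] [Monoid G]

noncomputable def subrepresentationInclusion (V : FDRep k G) (U : Subrepresentation V.ρ) :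
    FDRep.of U.toRepresentation ⟶ V :=
  ⟨ConcreteCategory.ofHom U.toSubmodule.subtype, fun _ => rfl⟩

lemma injective_of_mono {V W : FDRep k G} (f : V ⟶ W) [Mono f] : Function.Injective f :=
  (Rep.mono_iff_injective ((forget₂ (FDRep k G) (Rep k G)).map f)).1 inferInstance

lemma isIrreducible_of_simple (V : FDRep k G) [Simple V] : Representation.IsIrreducible V.ρ := by
  have : Nontrivial V := by
    by_contra hV
    rw [not_nontrivial_iff_subsingleton] at hV
    exact id_nonzero V (ConcreteCategory.hom_ext _ _ fun v => Subsingleton.elim _ _)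
  refine Representation.isIrreducible_of_forall_toSubmodule_eq_top fun U hU => ?_
  have : Mono (subrepresentationInclusion V U) :=
    ConcreteCategory.mono_of_injective _ Subtype.val_injective
  have hne : subrepresentationInclusion V U ≠ 0 := fun h => hU <| by
    rw [Submodule.eq_bot_iff]
    intro v hv
    exact ConcreteCategory.congr_hom h ⟨v, hv⟩
  have hiso := (Simple.mono_isIso_iff_nonzero _).2 hne
  rw [Submodule.eq_top_iff']
  intro v
  obtain ⟨u, rfl⟩ := ((ConcreteCategory.isIso_iff_bijective _).1 hiso).2 v
  exact u.2

lemma simple_of_isIrreducible (V : FDRep k G) [Representation.IsIrreducible V.ρ] : Simple V where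
  mono_isIso_iff_nonzero {Y} f _ := by
    refine ⟨fun hf h => ?_, fun hf => ?_⟩
    · have := Representation.IsIrreducible.nontrivial V.ρ
      obtain ⟨v, hv⟩ := exists_ne (0 : V)
      obtain ⟨y, rfl⟩ := ((ConcreteCategory.isIso_iff_bijective f).1 hf).2 v
      exact hv (by rw [h]; rfl)
    · let U : Subrepresentation V.ρ := ⟨LinearMap.range f.hom.hom.hom, by
        rintro g _ ⟨y, rfl⟩
        exact ⟨Y.ρ g y, ConcreteCategory.congr_hom (f.comm g) y⟩⟩
      have hU : U.toSubmodule = ⊤ := Representation.IsIrreducible.toSubmodule_eq_top U fun h =>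
        hf (ConcreteCategory.hom_ext _ _ fun y =>
          (Submodule.mem_bot k).1 (h ▸ LinearMap.mem_range_self f.hom.hom.hom y))
      refine (ConcreteCategory.isIso_iff_bijective f).2 ⟨injective_of_mono f, fun v => ?_⟩
      obtain ⟨y, hy⟩ : v ∈ U.toSubmodule := hU ▸ Submodule.mem_top
      exact ⟨y, hy⟩

end FDRep

instance MulAction.finite_orbit {M α : Type*} [Monoid M] [MulAction M α] [Finite M] (a : α) :
    Finite (MulAction.orbit M a) :=
  (Finite.finite_mulAction_orbit a).to_subtype

abbrev DistribSemidirect (A H : Type) [AddCommGroup A] [Group H] [DistribMulAction H A] : Type :=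
  Multiplicative A ⋊[(MulAutMultiplicative A).symm.toMonoidHom.comp
    (DistribMulAction.toAddAut H A)] H

namespace DistribSemidirect

open SemidirectProduct MulAction

section Basic

variable {A H : Type} [AddCommGroup A] [Group H] [DistribMulAction H A]

lemma inr_mul_inl (h : H) (a : Multiplicative A) :
    (inr h * inl a : DistribSemidirect A H) = inl (.ofAdd (h • a.toAdd)) * inr h := by
  ext
  · simp only [mul_left, left_inl, left_inr, right_inr, one_mul, map_one, mul_one]; rfl
  · simp only [mul_right, right_inl, right_inr, mul_one, one_mul]

instance {M : Type*} [CommMonoid M] : MulAction H (AddChar A M) where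
  smul h ψ := ψ.compAddMonoidHom (DistribSMul.toAddMonoidHom A h⁻¹)
  one_smul ψ := by ext a; show ψ ((1 : H)⁻¹ • a) = ψ a; simp
  mul_smul g h ψ := by ext a; show ψ ((g * h)⁻¹ • a) = ψ (h⁻¹ • g⁻¹ • a); simp [mul_smul]

lemma smul_addChar_apply {M : Type*} [CommMonoid M] (h : H) (ψ : AddChar A M) (a : A) :
    (h • ψ) a = ψ (h⁻¹ • a) := rfl

instance [Finite A] [Finite H] : Finite (DistribSemidirect A H) :=
  Finite.of_equiv _ equivProd.symm

end Basic

instance {A H : Type} [AddCommGroup A] [CommGroup H] [DistribMulAction H A] :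
    Group.IsSolvable (DistribSemidirect A H) :=
  Group.isSolvable_of_ker_le_range inl rightHom range_inl_eq_ker_rightHom.ge

section WeightSpace

variable {A H W : Type} [AddCommGroup A] [Group H] [DistribMulAction H A]
  [AddCommGroup W] [Module ℂ W] (ρ : Representation ℂ (DistribSemidirect A H) W)

def weightSpace (ψ : AddChar A ℂ) : Submodule ℂ W :=
  ⨅ a : A, Module.End.eigenspace (ρ (inl (.ofAdd a))) (ψ a)

variable {ρ}

lemma mem_weightSpace {ψ : AddChar A ℂ} {v : W} :
    v ∈ weightSpace ρ ψ ↔ ∀ a, ρ (inl (.ofAdd a)) v = ψ a • v := by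
  simp only [weightSpace, Submodule.mem_iInf, Module.End.mem_eigenspace_iff]

lemma inr_mem_weightSpace {ψ : AddChar A ℂ} {v : W} (hv : v ∈ weightSpace ρ ψ) (h : H) :
    ρ (inr h) v ∈ weightSpace ρ (h • ψ) := by
  rw [mem_weightSpace] at hv ⊢
  intro a
  have hconj : (inl (.ofAdd a) * inr h : DistribSemidirect A H) =
      inr h * inl (.ofAdd (h⁻¹ • a)) := by
    rw [inr_mul_inl]; simp
  rw [← Module.End.mul_apply, ← map_mul, hconj, map_mul, Module.End.mul_apply, hv, map_smul,
    smul_addChar_apply]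

lemma commute_inl (a b : A) : Commute (ρ (inl (.ofAdd a))) (ρ (inl (.ofAdd b))) :=
  ((Commute.all (Multiplicative.ofAdd a) (Multiplicative.ofAdd b)).map inl).map ρ

variable (ρ) in
lemma iSupIndep_weightSpace : iSupIndep (weightSpace ρ) := by
  have := Module.End.independent_iInf_maxGenEigenspace_of_forall_mapsTo
    (fun a : A => ρ (inl (.ofAdd a)))
    fun a b c => Module.End.mapsTo_maxGenEigenspace_of_comm (commute_inl b a) c
  refine (this.comp (f := fun ψ : AddChar A ℂ => (ψ : A → ℂ))
    DFunLike.coe_injective).mono fun ψ => ?_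
  exact iInf_mono fun a => Module.End.eigenspace_le_maxGenEigenspace

lemma exists_ne_zero_mem_weightSpace [FiniteDimensional ℂ W] {U : Submodule ℂ W}
    (hU : ∀ a : A, ∀ v ∈ U, ρ (inl (.ofAdd a)) v ∈ U) (hU0 : U ≠ ⊥) :
    ∃ ψ : AddChar A ℂ, ∃ v ∈ U, v ≠ 0 ∧ v ∈ weightSpace ρ ψ := by
  have : Nontrivial U := Submodule.nontrivial_iff_ne_bot.mpr hU0
  obtain ⟨v, hv0, hv⟩ := Module.End.exists_forall_apply_eq_smul_of_commute
    (fun a : A => (ρ (inl (.ofAdd a))).restrict (hU a))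
    fun a b => LinearMap.restrict_commute (commute_inl a b) _ _
  choose c hc using hv
  replace hc a : ρ (inl (.ofAdd a)) (v : W) = c a • (v : W) := congrArg Subtype.val (hc a)
  replace hv0 : (v : W) ≠ 0 := by simpa using hv0
  let ψ : AddChar A ℂ :=
    { toFun := c
      map_zero_eq_one' := smul_left_injective ℂ hv0 (by
        simp only [← hc, ofAdd_zero, map_one, Module.End.one_apply, one_smul])
      map_add_eq_mul' := fun a b => smul_left_injective ℂ hv0 (by
        change c (a + b) • (v : W) = (c a * c b) • (v : W)
        rw [← hc, mul_comm, ← smul_smul, ← hc, ← map_smul, ← hc, ofAdd_add, map_mul, map_mul,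
          Module.End.mul_apply]) }
  exact ⟨ψ, v, v.2, hv0, mem_weightSpace.mpr hc⟩

lemma apply_mem_of_forall_inl_inr {U : Submodule ℂ W}
    (hA : ∀ a, ∀ v ∈ U, ρ (inl a) v ∈ U) (hH : ∀ h, ∀ v ∈ U, ρ (inr h) v ∈ U)
    (g : DistribSemidirect A H) {v : W} (hv : v ∈ U) : ρ g v ∈ U := by
  rw [← inl_left_mul_inr_right g, map_mul, Module.End.mul_apply]
  exact hA _ _ (hH _ _ hv)

end WeightSpace

section IrreducibleDegree

variable {A H W : Type} [AddCommGroup A] [CommGroup H] [DistribMulAction H A]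
  [AddCommGroup W] [Module ℂ W] {ρ : Representation ℂ (DistribSemidirect A H) W}

lemma exists_stabilizer_eigenvector_mem_weightSpace [FiniteDimensional ℂ W] {ψ : AddChar A ℂ}
    (hψ : weightSpace ρ ψ ≠ ⊥) : ∃ v ∈ weightSpace ρ ψ, v ≠ 0 ∧
      ∀ s ∈ stabilizer H ψ, ∃ c : ℂ, ρ (inr s) v = c • v := by
  have hstab (s : stabilizer H ψ) : ∀ v ∈ weightSpace ρ ψ,
      ρ (inr (s : H)) v ∈ weightSpace ρ ψ := fun v hv => by
    simpa [mem_stabilizer_iff.1 s.2] using inr_mem_weightSpace hv s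
  have : Nontrivial (weightSpace ρ ψ) := Submodule.nontrivial_iff_ne_bot.mpr hψ
  obtain ⟨v, hv0, hv⟩ := Module.End.exists_forall_apply_eq_smul_of_commute
    (fun s : stabilizer H ψ => (ρ (inr (s : H))).restrict (hstab s))
    fun s t => LinearMap.restrict_commute (((Commute.all (s : H) t).map inr).map ρ) _ _
  refine ⟨v, v.2, by simpa using hv0, fun s hs => ?_⟩
  obtain ⟨c, hc⟩ := hv ⟨s, hs⟩
  exact ⟨c, congrArg Subtype.val hc⟩

open Submodule in
lemma finrank_eq_card_orbit [Finite H] [ρ.IsIrreducible] {ψ : AddChar A ℂ} {v : W}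
    (hvψ : v ∈ weightSpace ρ ψ) (hv0 : v ≠ 0)
    (hv : ∀ s ∈ stabilizer H ψ, ∃ c : ℂ, ρ (inr s) v = c • v) :
    Module.finrank ℂ W = Nat.card (orbit H ψ) := by
  choose r hr using fun ξ : orbit H ψ => mem_orbit_iff.1 ξ.2
  set w : orbit H ψ → W := fun ξ => ρ (inr (r ξ)) v
  have hw_mem (ξ : orbit H ψ) : w ξ ∈ weightSpace ρ ξ := hr ξ ▸ inr_mem_weightSpace hvψ (r ξ)
  have hw_ne (ξ : orbit H ψ) : w ξ ≠ 0 :=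
    ((ρ.apply_bijective _).1.ne_iff' (map_zero _)).2 hv0
  have hli : LinearIndependent ℂ w :=
    ((iSupIndep_weightSpace ρ).comp Subtype.val_injective).linearIndependent _ hw_mem hw_ne
  have hmaps (T : Module.End ℂ W) (hT : ∀ ξ, T (w ξ) ∈ span ℂ (Set.range w)) :
      ∀ x ∈ span ℂ (Set.range w), T x ∈ span ℂ (Set.range w) := fun x hx =>
    (span_le (p := (span ℂ (Set.range w)).comap T)).2 (by rintro _ ⟨ξ, rfl⟩; exact hT ξ) hx
  have hspan : span ℂ (Set.range w) = ⊤ := by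
    refine Representation.IsIrreducible.toSubmodule_eq_top ⟨_, apply_mem_of_forall_inl_inr
      (ρ := ρ) (fun a => hmaps _ fun ξ => ?_) (fun h => hmaps _ fun ξ => ?_)⟩ ?_
    · rw [← ofAdd_toAdd a, mem_weightSpace.1 (hw_mem ξ)]
      exact smul_mem _ _ (subset_span ⟨ξ, rfl⟩)
    · -- `h` moves `w ξ` to a multiple of `w (h • ξ)`, as the two differ by the stabiliser
      have hs : (r (h • ξ))⁻¹ * (h * r ξ) ∈ stabilizer H ψ := by
        rw [mem_stabilizer_iff, mul_smul, mul_smul, hr ξ, inv_smul_eq_iff, hr]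
        rfl
      obtain ⟨c, hc⟩ := hv _ hs
      have : ρ (inr h) (w ξ) = c • w (h • ξ) := by
        rw [← map_smul, ← hc]
        simp only [w, ← Module.End.mul_apply, ← map_mul, mul_inv_cancel_left]
      rw [this]
      exact smul_mem _ _ (subset_span ⟨_, rfl⟩)
    · exact fun h => hw_ne ⟨ψ, mem_orbit_self ψ⟩
        ((Submodule.eq_bot_iff _).1 h _ (subset_span ⟨_, rfl⟩))
  exact Module.finrank_eq_nat_card_basis (Module.Basis.mk hli hspan.ge)

theorem exists_finrank_eq_card_orbit [FiniteDimensional ℂ W] [Finite H] [ρ.IsIrreducible] :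
    ∃ ψ : AddChar A ℂ, Module.finrank ℂ W = Nat.card (orbit H ψ) := by
  have := Representation.IsIrreducible.nontrivial ρ
  obtain ⟨ψ, v₀, -, hv₀, hv₀ψ⟩ :=
    exists_ne_zero_mem_weightSpace (ρ := ρ) (U := ⊤) (fun _ _ _ => trivial) top_ne_bot
  obtain ⟨v, hvψ, hv0, hv⟩ :=
    exists_stabilizer_eigenvector_mem_weightSpace ((Submodule.ne_bot_iff _).2 ⟨v₀, hv₀ψ, hv₀⟩)
  exact ⟨ψ, finrank_eq_card_orbit hvψ hv0 hv⟩

end IrreducibleDegree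

section OrbitRep

variable {A H : Type} [AddCommGroup A] [Group H] [DistribMulAction H A]

/-- The representation induced from `ψ`, extended trivially to `A ⋊ stabilizer H ψ`, realised on
the functions on the orbit of `ψ`. -/
def orbitRep (ψ : AddChar A ℂ) :
    Representation ℂ (DistribSemidirect A H) (orbit H ψ → ℂ) where
  toFun g :=
    { toFun f ξ := (ξ : AddChar A ℂ) g.left.toAdd * f (g.right⁻¹ • ξ)
      map_add' f f' := by funext ξ; simp [mul_add]
      map_smul' c f := by funext ξ; simp [mul_left_comm] }
  map_one' := by ext f ξ; simp
  map_mul' g g' := by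
    ext f ξ
    simp [mul_inv_rev, mul_smul, smul_addChar_apply, AddChar.map_add_eq_mul, mul_assoc]

variable {ψ : AddChar A ℂ}

lemma orbitRep_apply (g : DistribSemidirect A H) (f : orbit H ψ → ℂ) (ξ : orbit H ψ) :
    orbitRep ψ g f ξ = (ξ : AddChar A ℂ) g.left.toAdd * f (g.right⁻¹ • ξ) := rfl

lemma orbitRep_inl (a : A) (f : orbit H ψ → ℂ) :
    orbitRep ψ (inl (.ofAdd a)) f = fun ξ : orbit H ψ => (ξ : AddChar A ℂ) a * f ξ := by
  ext ξ
  rw [orbitRep_apply, left_inl, right_inl, inv_one, one_smul, toAdd_ofAdd]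

lemma orbitRep_inr (h : H) (f : orbit H ψ → ℂ) :
    orbitRep ψ (inr h) f = fun ξ => f (h⁻¹ • ξ) := by
  ext ξ
  rw [orbitRep_apply, left_inr, right_inr, toAdd_one, AddChar.map_zero_eq_one, one_mul]

lemma orbitRep_inr_single (h : H) (ξ : orbit H ψ) :
    orbitRep ψ (inr h) (Pi.single ξ 1) = Pi.single (h • ξ) 1 := by
  rw [orbitRep_inr]
  ext η
  simp only [Pi.single_apply, inv_smul_eq_iff]

lemma coe_eq_of_mem_weightSpace_orbitRep {χ : AddChar A ℂ} {f : orbit H ψ → ℂ}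
    (hf : f ∈ weightSpace (orbitRep ψ) χ) {ξ : orbit H ψ} (hξ : f ξ ≠ 0) :
    (ξ : AddChar A ℂ) = χ := by
  ext a
  have := congrFun (mem_weightSpace.1 hf a) ξ
  rw [orbitRep_inl] at this
  exact mul_right_cancel₀ hξ this

variable (ψ) in
theorem isIrreducible_orbitRep [Finite H] : (orbitRep (H := H) ψ).IsIrreducible := by
  have : Nonempty (orbit H ψ) := ⟨⟨ψ, mem_orbit_self ψ⟩⟩
  refine Representation.isIrreducible_of_forall_toSubmodule_eq_top fun U hU => ?_
  obtain ⟨χ, f, hfU, hf0, hfχ⟩ :=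
    exists_ne_zero_mem_weightSpace (fun a => U.apply_mem_toSubmodule (inl (.ofAdd a))) hU
  obtain ⟨ξ₀, hξ₀⟩ := Function.ne_iff.1 hf0
  -- the weights of the points of an orbit are distinct, so `f` is supported at `ξ₀`
  have hf : f = f ξ₀ • Pi.single ξ₀ 1 := by
    rw [← Pi.single_smul, smul_eq_mul, mul_one]
    ext ξ
    by_cases h : ξ = ξ₀
    · subst h; simp
    · rw [Pi.single_eq_of_ne h]
      by_contra hξ
      exact h (Subtype.ext ((coe_eq_of_mem_weightSpace_orbitRep hfχ hξ).trans
        (coe_eq_of_mem_weightSpace_orbitRep hfχ hξ₀).symm))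
  have hsingle (η : orbit H ψ) : Pi.single η 1 ∈ U.toSubmodule := by
    obtain ⟨h, rfl⟩ := exists_smul_eq H ξ₀ η
    rw [← orbitRep_inr_single]
    refine U.apply_mem_toSubmodule _ ?_
    rw [← inv_smul_smul₀ hξ₀ (Pi.single ξ₀ (1 : ℂ) : orbit H ψ → ℂ), ← hf]
    exact U.toSubmodule.smul_mem _ hfU
  have := Fintype.ofFinite (orbit H ψ)
  rw [Submodule.eq_top_iff']
  intro f'
  rw [← Finset.univ_sum_single f']
  refine Submodule.sum_mem _ fun η _ => ?_
  rw [← mul_one (f' η), ← smul_eq_mul, Pi.single_smul]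
  exact U.toSubmodule.smul_mem _ (hsingle η)

end OrbitRep

theorem charDegrees_eq_range_card_orbit {A H : Type} [AddCommGroup A] [CommGroup H] [Finite H]
    [DistribMulAction H A] :
    charDegrees (DistribSemidirect A H) =
      Set.range fun ψ : AddChar A ℂ => Nat.card (orbit H ψ) := by
  ext d
  constructor
  · rintro ⟨V, hV, rfl⟩
    have := FDRep.isIrreducible_of_simple V
    obtain ⟨ψ, hψ⟩ := exists_finrank_eq_card_orbit (ρ := V.ρ)
    exact ⟨ψ, hψ.symm⟩
  · rintro ⟨ψ, rfl⟩
    have := Fintype.ofFinite (orbit H ψ)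
    have : Representation.IsIrreducible (FDRep.of (orbitRep (H := H) ψ)).ρ :=
      isIrreducible_orbitRep ψ
    refine ⟨FDRep.of (orbitRep ψ), FDRep.simple_of_isIrreducible _, ?_⟩
    exact (Module.finrank_fintype_fun_eq_card ℂ).trans Nat.card_eq_fintype_card.symm

end DistribSemidirect

namespace AddChar

variable {R M ι : Type*} [CommRing R] [CommMonoid M] [Fintype ι]

protected def dotProduct (ψ : AddChar R M) (c : ι → R) : AddChar (ι → R) M where
  toFun a := ψ (c ⬝ᵥ a)
  map_zero_eq_one' := by simp
  map_add_eq_mul' a b := by rw [dotProduct_add, map_add_eq_mul]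

lemma dotProduct_apply (ψ : AddChar R M) (c a : ι → R) : ψ.dotProduct c a = ψ (c ⬝ᵥ a) := rfl

lemma dotProduct_injective [DecidableEq ι] {ψ : AddChar R M} (hψ : ψ.IsPrimitive) :
    Function.Injective (ψ.dotProduct : (ι → R) → AddChar (ι → R) M) := fun c c' h =>
  funext fun l => to_mulShift_inj_of_isPrimitive hψ <| DFunLike.ext _ _ fun x => by
    simpa [dotProduct_apply, mulShift_apply] using DFunLike.congr_fun h (Pi.single l x)

lemma dotProduct_bijective [DecidableEq ι] [Fintype R] {ψ : AddChar R ℂ} (hψ : ψ.IsPrimitive) :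
    Function.Bijective (ψ.dotProduct : (ι → R) → AddChar (ι → R) ℂ) := by
  rw [Fintype.bijective_iff_injective_and_card]
  exact ⟨dotProduct_injective hψ, card_eq.symm⟩

lemma exists_isPrimitive (F : Type*) [Field F] [Finite F] : ∃ ψ : AddChar F ℂ, ψ.IsPrimitive := by
  obtain ⟨ψ, hψ⟩ := (exists_apply_ne_zero (a := (1 : F))).2 one_ne_zero
  exact ⟨ψ, IsPrimitive.of_ne_one fun h => hψ (by simp [h])⟩

end AddChar

namespace DistribSemidirect

open MulAction

section PiUnits

variable {F ι : Type} [Field F] {μ : Subgroup Fˣ}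

lemma smul_dotProduct [Fintype ι] (ψ : AddChar F ℂ) (h : ι → μ) (c : ι → F) :
    h • ψ.dotProduct c = ψ.dotProduct (h⁻¹ • c) := by
  ext a
  rw [smul_addChar_apply, AddChar.dotProduct_apply, AddChar.dotProduct_apply]
  congr 1
  simp only [dotProduct, Pi.smul_apply', Subgroup.smul_def, Units.smul_def, smul_eq_mul]
  exact Finset.sum_congr rfl fun l _ => by ring

lemma card_orbit_dotProduct [Fintype ι] [DecidableEq ι] {ψ : AddChar F ℂ} (hψ : ψ.IsPrimitive)
    (c : ι → F) : Nat.card (orbit (ι → μ) (ψ.dotProduct c)) = Nat.card (orbit (ι → μ) c) := by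
  have : orbit (ι → μ) (ψ.dotProduct c) = ψ.dotProduct '' orbit (ι → μ) c := by
    ext χ
    simp only [mem_orbit_iff, Set.mem_image]
    constructor
    · rintro ⟨h, rfl⟩
      exact ⟨h⁻¹ • c, ⟨h⁻¹, rfl⟩, (smul_dotProduct ψ h c).symm⟩
    · rintro ⟨_, ⟨h, rfl⟩, rfl⟩
      exact ⟨h⁻¹, by rw [smul_dotProduct, inv_inv]⟩
  rw [this, Nat.card_image_of_injective (AddChar.dotProduct_injective hψ)]

lemma card_orbit_pi [Finite ι] (c : ι → F) :
    Nat.card (orbit (ι → μ) c) = Nat.card μ ^ Nat.card (Function.support c) := by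
  let ext (t : Function.support c → μ) : ι → μ := Function.extend Subtype.val t 1
  have ext_apply (t : Function.support c → μ) (l : Function.support c) : ext t l = t l :=
    Subtype.val_injective.extend_apply _ _ _
  let f (t : Function.support c → μ) : orbit (ι → μ) c := ⟨ext t • c, mem_orbit c _⟩
  have hf : Function.Bijective f := by
    constructor
    · intro t t' htt'
      funext l
      have := congrFun (congrArg Subtype.val htt') l
      simp only [f, Pi.smul_apply', Subgroup.smul_def, Units.smul_def, ext_apply] at this
      exact Subtype.ext (Units.ext (mul_right_cancel₀ l.2 this))
    · rintro ⟨_, h, rfl⟩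
      refine ⟨fun l => h l, Subtype.ext (funext fun l => ?_)⟩
      by_cases hl : c l = 0
      · simp [f, hl]
      · exact congrArg (· • c l) (ext_apply _ ⟨l, hl⟩)
  rw [← Nat.card_eq_of_bijective f hf, Nat.card_fun]

theorem charDegrees_pi [Finite F] [Finite ι] :
    charDegrees (DistribSemidirect (ι → F) (ι → μ)) =
      {d | ∃ i ≤ Nat.card ι, d = Nat.card μ ^ i} := by
  classical
  obtain ⟨ψ, hψ⟩ := AddChar.exists_isPrimitive F
  have := Fintype.ofFinite F
  have := Fintype.ofFinite ι
  rw [charDegrees_eq_range_card_orbit]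
  ext d
  simp only [Set.mem_range, Set.mem_ofPred_eq]
  constructor
  · rintro ⟨χ, rfl⟩
    obtain ⟨c, rfl⟩ := (AddChar.dotProduct_bijective hψ).2 χ
    exact ⟨_, Finite.card_subtype_le _, by rw [card_orbit_dotProduct hψ, card_orbit_pi]⟩
  · rintro ⟨i, hi, rfl⟩
    obtain ⟨s, -, hs⟩ := Finset.exists_subset_card_eq (s := Finset.univ) (n := i)
      (by simpa [Nat.card_eq_fintype_card] using hi)
    refine ⟨ψ.dotProduct fun l => if l ∈ s then 1 else 0, ?_⟩
    have : Function.support (fun l => if l ∈ s then (1 : F) else 0) = s := by ext; simp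
    rw [card_orbit_dotProduct hψ, card_orbit_pi, this, Nat.card_coe_set_eq, Set.ncard_coe_finset,
      hs]

end PiUnits

end DistribSemidirect

lemma IsCyclic.exists_orderOf_eq_of_dvd {α : Type*} [Group α] [Finite α] [IsCyclic α] {d : ℕ}
    (hd : d ∣ Nat.card α) : ∃ g : α, orderOf g = d := by
  obtain ⟨g, hg⟩ := IsCyclic.exists_ofOrder_eq_natCard (α := α)
  exact ⟨g ^ (orderOf g / d), orderOf_pow_orderOf_div (hg ▸ Nat.card_pos.ne') (hg ▸ hd)⟩

section Powers

variable {n k : ℕ}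

lemma powers_sdiff_one (hn : 2 ≤ n) :
    {d : ℕ | ∃ i ≤ k, d = n ^ i} \ {1} = (n ^ ·) '' Set.Icc 1 k := by
  ext d
  simp only [Set.mem_sdiff, Set.mem_ofPred_eq, Set.mem_singleton_iff, Set.mem_image, Set.mem_Icc]
  constructor
  · rintro ⟨⟨i, hik, rfl⟩, hne⟩
    exact ⟨i, ⟨Nat.pos_of_ne_zero fun h => hne (by simp [h]), hik⟩, rfl⟩
  · rintro ⟨i, ⟨hi, hik⟩, rfl⟩
    exact ⟨⟨i, hik, rfl⟩, (Nat.one_lt_pow (by omega) (by omega)).ne'⟩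

lemma ncard_powers_sdiff_one (hn : 2 ≤ n) : ({d : ℕ | ∃ i ≤ k, d = n ^ i} \ {1}).ncard = k := by
  rw [powers_sdiff_one hn, Set.ncard_image_of_injective _ (Nat.pow_right_injective hn),
    ← Finset.coe_Icc, Set.ncard_coe_finset, Nat.card_Icc, Nat.add_sub_cancel]

lemma Nat.Prime.dvd_of_dvd_mem_powers_sdiff_one {q x y : ℕ} (hq : q.Prime)
    (hx : x ∈ {d : ℕ | ∃ i ≤ k, d = n ^ i} \ {1}) (hqx : q ∣ x)
    (hy : y ∈ {d : ℕ | ∃ i ≤ k, d = n ^ i} \ {1}) : q ∣ y := by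
  obtain ⟨⟨i, -, rfl⟩, -⟩ := hx
  obtain ⟨⟨j, -, rfl⟩, hj⟩ := hy
  have hj : j ≠ 0 := fun h => hj (by simp [h])
  exact (hq.dvd_of_dvd_pow hqx).trans (dvd_pow_self n hj)

lemma setOf_prime_dvd_powers_sdiff_one (hn : 2 ≤ n) (hk : 0 < k) :
    {q : ℕ | q.Prime ∧ ∃ x ∈ {d : ℕ | ∃ i ≤ k, d = n ^ i} \ {1}, q ∣ x} = n.primeFactors := by
  ext q
  rw [Finset.mem_coe, Nat.mem_primeFactors, Set.mem_ofPred_eq]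
  refine and_congr_right fun hq => ⟨fun ⟨x, hx, hqx⟩ => ⟨?_, by omega⟩, fun ⟨hqn, _⟩ => ?_⟩
  · obtain ⟨⟨i, -, rfl⟩, -⟩ := hx
    exact hq.dvd_of_dvd_pow hqx
  · exact ⟨n, ⟨⟨1, hk, (pow_one n).symm⟩, fun h : n = 1 => by omega⟩, hqn⟩

end Powers

theorem stmt5 (m k : ℕ) (hm : 0 < m) (hk : 0 < k) :
    ∃ G : GrpCat, Finite G ∧ IsSolvable G ∧
      ∃ (P : Finset ℕ) (n : ℕ), P.card = m ∧ (∀ p ∈ P, p.Prime) ∧ n = ∏ p ∈ P, p ∧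
        charDegrees G = {d : ℕ | ∃ i ≤ k, d = n ^ i} ∧
        (∀ (p : {p : ℕ // p.Prime ∧ ∃ x ∈ (charDegrees G \ {1} : Set ℕ), p ∣ x})
           (x : {x : ℕ // x ∈ (charDegrees G \ {1} : Set ℕ)}),
           (bdg (charDegrees G \ {1})).Adj (Sum.inr p) (Sum.inl x)) ∧
        (charDegrees G \ {1} : Set ℕ).ncard = k ∧
        {p : ℕ | p.Prime ∧ ∃ x ∈ (charDegrees G \ {1} : Set ℕ), p ∣ x}.ncard = m := by
  classical
  obtain ⟨P, hPprime, hPcard⟩ := Nat.infinite_setOfPred_prime.exists_subset_card_eq m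
  set n := ∏ q ∈ P, q
  have hn : 2 ≤ n := by
    obtain ⟨q, hq⟩ := Finset.card_pos.1 (hPcard ▸ hm)
    exact (hPprime hq).two_le.trans (Nat.le_of_dvd (Finset.prod_pos fun q hq =>
      (hPprime hq).pos) (Finset.dvd_prod_of_mem _ hq))
  obtain ⟨p, hp, -, hpn⟩ := Nat.exists_prime_gt_modEq_one 0 (by omega : n ≠ 0)
  have : Fact p.Prime := ⟨hp⟩
  obtain ⟨u, hu⟩ := IsCyclic.exists_orderOf_eq_of_dvd (α := (ZMod p)ˣ) (d := n) (by
    rw [Nat.card_eq_fintype_card, ZMod.card_units]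
    exact (Nat.modEq_iff_dvd' hp.one_le).1 hpn.symm)
  let G := DistribSemidirect (Fin k → ZMod p) (Fin k → Subgroup.zpowers u)
  have hcd : charDegrees G = {d | ∃ i ≤ k, d = n ^ i} := by
    rw [DistribSemidirect.charDegrees_pi, Nat.card_zpowers, hu, Nat.card_fin]
  refine ⟨GrpCat.of G, inferInstanceAs (Finite G), inferInstanceAs (Group.IsSolvable G), P, n,
    hPcard, fun q hq => hPprime hq, rfl, hcd, fun q x => ?_, hcd ▸ ncard_powers_sdiff_one hn, ?_⟩
  · obtain ⟨hq, x₀, hx₀, hqx₀⟩ := q.2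
    refine (SimpleGraph.fromRel_adj _ _ _).2 ⟨by simp, Or.inl ?_⟩
    exact hq.dvd_of_dvd_mem_powers_sdiff_one (hcd ▸ hx₀) hqx₀ (hcd ▸ x.2)
  · rw [show charDegrees (GrpCat.of G) = _ from hcd, setOf_prime_dvd_powers_sdiff_one hn hk,
      Nat.primeFactors_prod hPprime, Set.ncard_coe_finset, hPcard]
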